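/- Let d > 0 be a real number, let Z ~ N(0,1), and let U be the d-quantization of Z. Then E[U²] = 2·Q(d/2) + 2·Σ_{ℓ=2}^∞ (2ℓ−1)·Q(dℓ − d/2), the series being convergent. -/

import Mathlib

/-! For `N : Ω → ℕ` we have `N² = ∑_{n < N} (2n + 1)`, hence `E[N²] = ∑ₙ (2n + 1) P(N > n)`
(this replaces the Abel summation). For `N = |U|` the event `N > n` is
`Z ∉ (-d(n + 1/2), d(n + 1/2)]`, which by symmetry of the Gaussian has probability
`2 Q(d(n + 1/2))`. Integrability of `U²` comes from `|U| ≤ 2|Z|/d`. -/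

open MeasureTheory ProbabilityTheory

noncomputable def gaussQ (x : ℝ) : ℝ :=
  (Real.sqrt (2 * Real.pi))⁻¹ * ∫ z in Set.Ioi x, Real.exp (-z ^ 2 / 2)

open Set
open scoped ENNReal

lemma sum_range_two_mul_add_one (m : ℕ) : ∑ n ∈ Finset.range m, (2 * n + 1) = m ^ 2 := by
  induction m with
  | zero => rfl
  | succ m ih => rw [Finset.sum_range_succ, ih]; ring

lemma natCast_sq_eq_tsum_ite (m : ℕ) :
    (m : ℝ≥0∞) ^ 2 = ∑' n : ℕ, if n < m then (2 * n + 1 : ℝ≥0∞) else 0 := by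
  rw [tsum_eq_sum (s := Finset.range m) fun n hn => if_neg (by simpa using hn),
    Finset.sum_congr rfl fun n hn => if_pos (Finset.mem_range.1 hn)]
  exact_mod_cast (sum_range_two_mul_add_one m).symm

section SecondMoment

variable {Ω : Type*} [MeasurableSpace Ω] {μ : Measure Ω}

lemma lintegral_natCast_sq_eq_tsum_measure_lt (N : Ω → ℕ) (hN : AEMeasurable N μ) :
    ∫⁻ ω, (N ω : ℝ≥0∞) ^ 2 ∂μ = ∑' n : ℕ, (2 * n + 1) * μ {ω | n < N ω} := by
  simp_rw [natCast_sq_eq_tsum_ite]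
  refine (lintegral_tsum fun n => ?_).trans (tsum_congr fun n => ?_)
  · exact (Measurable.of_discrete
      (f := fun m : ℕ => if n < m then (2 * n + 1 : ℝ≥0∞) else 0)).comp_aemeasurable hN
  rw [← lintegral_indicator_const₀ (s := {ω | n < N ω})
    (hN.nullMeasurableSet_preimage measurableSet_Ioi)]
  simp only [indicator_apply, mem_ofPred_eq]

lemma hasSum_measureReal_lt_integral_natCast_sq (N : Ω → ℕ) (hN : AEMeasurable N μ)
    (hint : Integrable (fun ω => (N ω : ℝ) ^ 2) μ) :
    HasSum (fun n : ℕ => (2 * n + 1) * μ.real {ω | n < N ω}) (∫ ω, (N ω : ℝ) ^ 2 ∂μ) := by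
  have hfin := hint.lintegral_lt_top
  simp only [ENNReal.ofReal_pow (Nat.cast_nonneg _), ENNReal.ofReal_natCast,
    lintegral_natCast_sq_eq_tsum_measure_lt N hN] at hfin
  have h := ENNReal.hasSum_toReal hfin.ne
  rw [← ENNReal.tsum_toReal_eq (ENNReal.ne_top_of_tsum_ne_top hfin.ne),
    ← lintegral_natCast_sq_eq_tsum_measure_lt N hN] at h
  convert h using 1
  · ext n
    rw [ENNReal.toReal_mul, measureReal_def]
    norm_cast
  · rw [integral_eq_lintegral_of_nonneg_ae (ae_of_all _ fun ω => by positivity)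
      (by fun_prop)]
    simp [ENNReal.ofReal_pow]

end SecondMoment

lemma gaussQ_eq_measureReal (x : ℝ) : gaussQ x = (gaussianReal 0 1).real (Ioi x) := by
  rw [measureReal_def, gaussianReal_apply_eq_integral 0 one_ne_zero,
    ENNReal.toReal_ofReal (integral_nonneg fun z => gaussianPDFReal_nonneg 0 1 z), gaussQ,
    ← integral_const_mul]
  simp [gaussianPDFReal]

lemma gaussianReal_Iic_neg {v : NNReal} (hv : v ≠ 0) (x : ℝ) :
    gaussianReal 0 v (Iic (-x)) = gaussianReal 0 v (Ioi x) := by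
  have := nullSingletonClass_gaussianReal (μ := 0) hv
  calc gaussianReal 0 v (Iic (-x))
      = (gaussianReal 0 v).map (fun z => -z) (Iic (-x)) := by
        rw [gaussianReal_map_neg, neg_zero]
    _ = gaussianReal 0 v (Ici x) := by
        rw [Measure.map_apply measurable_neg measurableSet_Iic]
        congr 1
        ext z
        simp
    _ = gaussianReal 0 v (Ioi x) := measure_congr Ioi_ae_eq_Ici.symm

lemma measureReal_gaussianReal_Ioi_union_Iic_neg {x : ℝ} (hx : 0 ≤ x) :
    (gaussianReal 0 1).real (Ioi x ∪ Iic (-x)) = 2 * gaussQ x := by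
  have hdisj : Disjoint (Ioi x) (Iic (-x)) :=
    disjoint_left.2 fun z h1 h2 => by simp only [mem_Ioi, mem_Iic] at h1 h2; linarith
  rw [measureReal_union hdisj measurableSet_Iic, measureReal_def (s := Iic _),
    gaussianReal_Iic_neg one_ne_zero, ← measureReal_def, ← gaussQ_eq_measureReal]
  ring

lemma integrable_sq_of_map_eq_gaussianReal {Ω : Type*} [MeasurableSpace Ω] {P : Measure Ω}
    {Z : Ω → ℝ} (hZ : AEMeasurable Z P) {m : ℝ} {v : NNReal}
    (hZlaw : P.map Z = gaussianReal m v) : Integrable (fun ω => Z ω ^ 2) P := by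
  have h : Integrable (fun z : ℝ => z ^ 2) (P.map Z) :=
    hZlaw ▸ (memLp_id_gaussianReal 2).integrable_sq
  exact (integrable_map_measure (by fun_prop) hZ).1 h

section Quantize

noncomputable def quantize (d z : ℝ) : ℤ := ⌈z / d - 1 / 2⌉

variable {d : ℝ}

lemma measurable_quantize (d : ℝ) : Measurable (quantize d) :=
  Int.measurable_ceil.comp (by fun_prop)

lemma mem_Ioc_quantize (hd : 0 < d) (z : ℝ) :
    z ∈ Ioc (d * quantize d z - d / 2) (d * quantize d z + d / 2) := by
  have h1 := Int.ceil_lt_add_one (z / d - 1 / 2)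
  have h2 := Int.le_ceil (z / d - 1 / 2)
  have hz : d * (z / d) = z := mul_div_cancel₀ z hd.ne'
  constructor <;> (unfold quantize; nlinarith)

lemma abs_quantize_le (d z : ℝ) : |(quantize d z : ℝ)| ≤ 2 * |z / d| := by
  unfold quantize
  generalize z / d = x
  rcases lt_trichotomy ⌈x - 1 / 2⌉ 0 with hneg | hzero | hpos
  · have h : x - 1 / 2 ≤ -1 := by exact_mod_cast Int.ceil_le.1 (Int.le_sub_one_of_lt hneg)
    have := Int.le_ceil (x - 1 / 2)
    have : (⌈x - 1 / 2⌉ : ℝ) < 0 := by exact_mod_cast hneg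
    rw [abs_of_neg this, abs_of_neg (by linarith)]
    linarith
  · rw [hzero]; simp
  · have h : (0 : ℝ) < x - 1 / 2 := by exact_mod_cast Int.lt_ceil.1 hpos
    have := Int.ceil_lt_add_one (x - 1 / 2)
    have : (0 : ℝ) < ⌈x - 1 / 2⌉ := by exact_mod_cast hpos
    rw [abs_of_pos this, abs_of_pos (by linarith)]
    linarith

lemma lt_natAbs_quantize_iff (hd : 0 < d) (z : ℝ) (n : ℕ) :
    n < (quantize d z).natAbs ↔ z ∈ Ioi (d * (n + 1 / 2)) ∪ Iic (-(d * (n + 1 / 2))) := by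
  rw [quantize, ← Int.ofNat_lt, Int.natCast_natAbs, lt_abs, lt_neg, Int.lt_ceil,
    ← Int.le_sub_one_iff, Int.ceil_le, mem_union, mem_Ioi, mem_Iic, ← lt_div_iff₀' hd, ← mul_neg,
    ← div_le_iff₀' hd]
  push_cast
  constructor <;> rintro (h | h) <;> [left; right; left; right] <;> linarith

lemma integrable_sq_quantize {Ω : Type*} [MeasurableSpace Ω] {P : Measure Ω} {Z : Ω → ℝ}
    (hZ : AEMeasurable Z P) (hZ2 : Integrable (fun ω => Z ω ^ 2) P) (d : ℝ) :
    Integrable (fun ω => (quantize d (Z ω) : ℝ) ^ 2) P := by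
  refine (hZ2.const_mul (4 / d ^ 2)).mono' ((Measurable.of_discrete
      (f := fun k : ℤ => (k : ℝ) ^ 2)).comp_aemeasurable
      ((measurable_quantize d).comp_aemeasurable hZ)).aestronglyMeasurable
    (ae_of_all _ fun ω => ?_)
  calc ‖(quantize d (Z ω) : ℝ) ^ 2‖ = |(quantize d (Z ω) : ℝ)| ^ 2 := by
        rw [norm_pow, Real.norm_eq_abs]
    _ ≤ (2 * |Z ω / d|) ^ 2 := by gcongr; exact abs_quantize_le d (Z ω)
    _ = 4 / d ^ 2 * Z ω ^ 2 := by rw [mul_pow, sq_abs, div_pow]; ring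

end Quantize

lemma measureReal_lt_natAbs_quantize {Ω : Type*} [MeasurableSpace Ω] {P : Measure Ω}
    {d : ℝ} (hd : 0 < d) {Z : Ω → ℝ} (hZ : Measurable Z) (hZlaw : P.map Z = gaussianReal 0 1)
    (n : ℕ) : P.real {ω | n < (quantize d (Z ω)).natAbs} = 2 * gaussQ (d * (n + 1 / 2)) := by
  have hset : {ω | n < (quantize d (Z ω)).natAbs}
      = Z ⁻¹' (Ioi (d * (n + 1 / 2)) ∪ Iic (-(d * (n + 1 / 2)))) :=
    ext fun ω => lt_natAbs_quantize_iff hd (Z ω) n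
  rw [hset, ← map_measureReal_apply hZ (measurableSet_Ioi.union measurableSet_Iic), hZlaw,
    measureReal_gaussianReal_Ioi_union_Iic_neg (by positivity)]

theorem quantization_second_moment_series
    {Ω : Type*} [MeasurableSpace Ω] (P : Measure Ω)
    (d : ℝ) (hd : 0 < d)
    (Z : Ω → ℝ) (hZ : Measurable Z) (hZlaw : P.map Z = gaussianReal 0 1)
    (U : Ω → ℤ)
    (hquant : ∀ ω, ∀ ℓ : ℤ,
      Z ω ∈ Set.Ioc (d * ℓ - d / 2) (d * ℓ + d / 2) → U ω = ℓ) :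
    Integrable (fun ω => (U ω : ℝ) ^ 2) P ∧
    Summable (fun k : ℕ => (2 * ((k : ℝ) + 2) - 1) * gaussQ (d * ((k : ℝ) + 2) - d / 2)) ∧
    ∫ ω, (U ω : ℝ) ^ 2 ∂P
      = 2 * gaussQ (d / 2)
        + 2 * ∑' k : ℕ, (2 * ((k : ℝ) + 2) - 1) * gaussQ (d * ((k : ℝ) + 2) - d / 2) := by
  obtain rfl : U = fun ω => quantize d (Z ω) :=
    funext fun ω => hquant ω _ (mem_Ioc_quantize hd (Z ω))
  have hint := integrable_sq_quantize hZ.aemeasurable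
    (integrable_sq_of_map_eq_gaussianReal hZ.aemeasurable hZlaw) d
  have hsum : HasSum (fun n : ℕ => (2 * n + 1) * (2 * gaussQ (d * (n + 1 / 2))))
      (∫ ω, (quantize d (Z ω) : ℝ) ^ 2 ∂P) := by
    have h := hasSum_measureReal_lt_integral_natCast_sq (fun ω => (quantize d (Z ω)).natAbs)
      ((Measurable.of_discrete (f := Int.natAbs)).comp
        ((measurable_quantize d).comp hZ)).aemeasurable
      (by simpa only [Nat.cast_natAbs, Int.cast_abs, sq_abs] using hint)
    simpa only [measureReal_lt_natAbs_quantize hd hZ hZlaw, Nat.cast_natAbs, Int.cast_abs,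
      sq_abs] using h
  have hshift : HasSum
      (fun k : ℕ => (2 * ((k : ℝ) + 2) - 1) * gaussQ (d * ((k : ℝ) + 2) - d / 2))
      ((∫ ω, (quantize d (Z ω) : ℝ) ^ 2 ∂P - 2 * gaussQ (d / 2)) / 2) := by
    have h := ((hasSum_nat_add_iff' 1).mpr hsum).div_const 2
    simp only [Finset.sum_range_one, Nat.cast_zero, mul_zero, zero_add, one_mul,
      mul_one_div] at h
    refine h.congr_fun fun k => ?_
    rw [show d * (((k + 1 : ℕ) : ℝ) + 1 / 2) = d * ((k : ℝ) + 2) - d / 2 by push_cast; ring]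
    push_cast
    ring
  refine ⟨hint, hshift.summable, ?_⟩
  rw [hshift.tsum_eq]
  ring
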